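/- In three variables, the sequence R → P_r → (P_{r-1})^3 → (P_{r-2})^3 → P_{r-3} → 0 given by inclusion of constants, gradient, curl, and divergence is exact: kernel of grad is the constants, kernel of curl equals image of grad, kernel of div equals image of curl, and div is surjective onto P_{r-3}. -/

import Mathlib

open MvPolynomial

/-- `degLE n p` means `p ∈ P_n`, with the convention `P_n = {0}` for `n < 0`. -/
def degLE (n : ℤ) (p : MvPolynomial (Fin 3) ℝ) : Prop :=
  if 0 ≤ n then p.totalDegree ≤ n.toNat else p = 0

/-- The three-dimensional curl of a polynomial vector field. -/
noncomputable def curl3 (v : Fin 3 → MvPolynomial (Fin 3) ℝ) : Fin 3 → MvPolynomial (Fin 3) ℝ :=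
  ![pderiv 1 (v 2) - pderiv 2 (v 1),
    pderiv 2 (v 0) - pderiv 0 (v 2),
    pderiv 0 (v 1) - pderiv 1 (v 0)]

/-!
The Euler operator `E = ∑ᵢ Xᵢ ∂ᵢ` multiplies a monomial of degree `d` by `d`, so `E + k` is
inverted degreewise by `eulerInv k` (for `k ≠ 0`), which commutes with `∂ᵢ` up to the shift
`∂ᵢ ∘ eulerInv k = eulerInv (k + 1) ∘ ∂ᵢ`. Contraction with the position vector `X` is a
homotopy for the complex: `∂ᵢ (X · v) = (1 + E) vᵢ` when `v` is curl free,
`curl (w × X) = (2 + E) w` when `w` is divergence free, and `div (X q) = (3 + E) q`.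
Hence `eulerInv 0 (X · v)`, `eulerInv 1 (w × X)` and `eulerInv 2 (X q)` are the required
preimages; multiplying by `X` raises the degree by one and `eulerInv` does not raise it.
-/

open scoped Matrix

namespace MvPolynomial

variable {σ R : Type*}

section Euler

variable [CommSemiring R] [Fintype σ]

noncomputable def euler (p : MvPolynomial σ R) : MvPolynomial σ R := ∑ i, X i * pderiv i p

lemma euler_monomial (m : σ →₀ ℕ) (c : R) : euler (monomial m c) = m.degree • monomial m c := by
  simp_rw [euler, X_mul_pderiv_monomial, ← Finset.sum_smul, ← Finsupp.degree_eq_sum]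

lemma coeff_euler (m : σ →₀ ℕ) (p : MvPolynomial σ R) :
    coeff m (euler p) = m.degree * coeff m p := by
  classical
  induction p using induction_on' with
  | monomial n c =>
    rw [euler_monomial, coeff_smul, coeff_monomial]
    split_ifs with h <;> simp [h, nsmul_eq_mul]
  | add p q hp hq =>
    simp only [euler, map_add, mul_add, Finset.sum_add_distrib, coeff_add] at hp hq ⊢
    rw [hp, hq]

lemma forall_pderiv_eq_zero_iff [NoZeroDivisors R] [CharZero R] (p : MvPolynomial σ R) :
    (∀ i, pderiv i p = 0) ↔ ∃ c : R, p = C c := by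
  classical
  refine ⟨fun h => ⟨coeff 0 p, ?_⟩, by rintro ⟨c, rfl⟩ i; exact pderiv_C⟩
  have heuler : euler p = 0 := by simp [euler, h]
  ext m
  rw [coeff_C]
  split_ifs with hm
  · rw [hm]
  · have hcoeff := coeff_euler m p
    rw [heuler, coeff_zero, eq_comm, mul_eq_zero] at hcoeff
    exact hcoeff.resolve_left (by simpa [Finsupp.degree_eq_zero_iff] using Ne.symm hm)

lemma pderiv_sum_X_mul {v : σ → MvPolynomial σ R}
    (hv : ∀ i j, pderiv i (v j) = pderiv j (v i)) (i : σ) :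
    pderiv i (∑ j, X j * v j) = v i + euler (v i) := by
  classical
  simp [euler, pderiv_X, Pi.single_apply, Finset.sum_add_distrib, hv i, add_comm]

lemma sum_pderiv_X_mul (q : MvPolynomial σ R) :
    ∑ i, pderiv i (X i * q) = Fintype.card σ • q + euler q := by
  simp [euler, Finset.sum_add_distrib, add_comm]

end Euler

lemma pderiv_pderiv_comm [CommSemiring R] (i j : σ) (p : MvPolynomial σ R) :
    pderiv i (pderiv j p) = pderiv j (pderiv i p) := by
  rcases eq_or_ne i j with rfl | hij
  · rfl
  ext m
  simp only [coeff_pderiv, Finsupp.add_apply, Finsupp.single_eq_of_ne hij,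
    Finsupp.single_eq_of_ne hij.symm, add_zero, add_right_comm m]
  ring

section EulerInv

variable [Field R]

/-- For `k = 0` this kills the constant term, as `(0 : R)⁻¹ = 0`. -/
noncomputable def eulerInv (k : ℕ) : MvPolynomial σ R →ₗ[R] MvPolynomial σ R :=
  (basisMonomials σ R).constr R fun m => (m.degree + k : R)⁻¹ • monomial m 1

lemma eulerInv_monomial (k : ℕ) (m : σ →₀ ℕ) (c : R) :
    eulerInv k (monomial m c) = monomial m ((m.degree + k : R)⁻¹ * c) := by
  have hbasis : monomial m c = c • basisMonomials σ R m := by simp [smul_monomial]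
  rw [hbasis, map_smul, eulerInv, Module.Basis.constr_basis, smul_monomial, smul_monomial]
  simp [mul_comm]

lemma coeff_eulerInv (k : ℕ) (m : σ →₀ ℕ) (p : MvPolynomial σ R) :
    coeff m (eulerInv k p) = (m.degree + k : R)⁻¹ * coeff m p := by
  classical
  induction p using induction_on' with
  | monomial n c =>
    rw [eulerInv_monomial, coeff_monomial, coeff_monomial]
    split_ifs with h <;> simp [h]
  | add p q hp hq => simp [hp, hq, mul_add]

lemma pderiv_eulerInv (i : σ) (k : ℕ) (p : MvPolynomial σ R) :
    pderiv i (eulerInv k p) = eulerInv (k + 1) (pderiv i p) := by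
  ext m
  simp only [coeff_pderiv, coeff_eulerInv, map_add, Finsupp.degree_single]
  push_cast
  ring

variable [CharZero R] [Fintype σ]

lemma eulerInv_smul_add_euler {k : ℕ} (hk : k ≠ 0) (p : MvPolynomial σ R) :
    eulerInv k (k • p + euler p) = p := by
  ext m
  rw [coeff_eulerInv, coeff_add, coeff_smul, coeff_euler, nsmul_eq_mul, ← add_mul,
    add_comm (k : R), inv_mul_cancel_left₀ (by exact_mod_cast (by omega : m.degree + k ≠ 0))]

lemma pderiv_eulerInv_sum_X_mul {v : σ → MvPolynomial σ R}
    (hv : ∀ i j, pderiv i (v j) = pderiv j (v i)) (i : σ) :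
    pderiv i (eulerInv 0 (∑ j, X j * v j)) = v i := by
  rw [pderiv_eulerInv, pderiv_sum_X_mul hv]
  simpa using eulerInv_smul_add_euler one_ne_zero (v i)

lemma sum_pderiv_eulerInv_X_mul {k : ℕ} (hk : k + 1 = Fintype.card σ) (q : MvPolynomial σ R) :
    ∑ i, pderiv i (eulerInv k (X i * q)) = q := by
  simp_rw [pderiv_eulerInv, ← map_sum, sum_pderiv_X_mul, ← hk]
  exact eulerInv_smul_add_euler k.succ_ne_zero q

end EulerInv

end MvPolynomial

lemma curl3_eq_zero_iff (v : Fin 3 → MvPolynomial (Fin 3) ℝ) :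
    curl3 v = 0 ↔ ∀ i j, pderiv i (v j) = pderiv j (v i) := by
  constructor
  · intro h i j
    have h0 := congrFun h 0
    have h1 := congrFun h 1
    have h2 := congrFun h 2
    simp only [curl3, Matrix.cons_val, Pi.zero_apply, sub_eq_zero] at h0 h1 h2
    fin_cases i <;> fin_cases j <;> simp [h0, h1, h2]
  · intro h
    ext1 i
    fin_cases i <;> simp [curl3, h 1 2, h 2 0, h 0 1]

lemma div_curl3 (v : Fin 3 → MvPolynomial (Fin 3) ℝ) :
    pderiv 0 (curl3 v 0) + pderiv 1 (curl3 v 1) + pderiv 2 (curl3 v 2) = 0 := by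
  simp only [curl3, Matrix.cons_val, map_sub]
  rw [pderiv_pderiv_comm 0 1, pderiv_pderiv_comm 0 2, pderiv_pderiv_comm 1 2]
  abel

lemma curl3_eulerInv (k : ℕ) (v : Fin 3 → MvPolynomial (Fin 3) ℝ) (i : Fin 3) :
    curl3 (fun i => eulerInv k (v i)) i = eulerInv (k + 1) (curl3 v i) := by
  fin_cases i <;> simp [curl3, pderiv_eulerInv]

lemma curl3_cross_X (w : Fin 3 → MvPolynomial (Fin 3) ℝ) (i : Fin 3) :
    curl3 (w ⨯₃ X) i =
      2 • w i + euler (w i) - X i * (pderiv 0 (w 0) + pderiv 1 (w 1) + pderiv 2 (w 2)) := by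
  fin_cases i <;> simp [curl3, cross_apply, euler, Fin.sum_univ_three] <;> ring

lemma curl3_eulerInv_cross_X {w : Fin 3 → MvPolynomial (Fin 3) ℝ}
    (hw : pderiv 0 (w 0) + pderiv 1 (w 1) + pderiv 2 (w 2) = 0) :
    curl3 (fun i => eulerInv 1 ((w ⨯₃ X) i)) = w := by
  ext1 i
  rw [curl3_eulerInv, curl3_cross_X, hw, mul_zero, sub_zero]
  exact eulerInv_smul_add_euler two_ne_zero (w i)

lemma degLE_iff {n : ℤ} {p : MvPolynomial (Fin 3) ℝ} :
    degLE n p ↔ ∀ m ∈ p.support, (m.degree : ℤ) ≤ n := by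
  unfold degLE
  split_ifs with hn
  · simp only [totalDegree, Finset.sup_le_iff]
    refine forall₂_congr fun m _ => ?_
    change m.degree ≤ n.toNat ↔ _
    omega
  · rw [← support_eq_empty, Finset.eq_empty_iff_forall_notMem]
    exact forall_congr' fun m => ⟨fun h hm => absurd hm h, fun h hm => by have := h hm; omega⟩

lemma degLE_natCast {n : ℕ} {p : MvPolynomial (Fin 3) ℝ} :
    degLE n p ↔ p.totalDegree ≤ n := by
  simp [degLE]

lemma degLE_of_support_subset {n : ℤ} {p q : MvPolynomial (Fin 3) ℝ} (hpq : p.support ⊆ q.support)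
    (hq : degLE n q) : degLE n p :=
  degLE_iff.2 fun m hm => degLE_iff.1 hq m (hpq hm)

lemma degLE_add {n : ℤ} {p q : MvPolynomial (Fin 3) ℝ} (hp : degLE n p) (hq : degLE n q) :
    degLE n (p + q) := by
  classical
  refine degLE_iff.2 fun m hm => ?_
  rcases Finset.mem_union.1 (support_add hm) with h | h
  exacts [degLE_iff.1 hp m h, degLE_iff.1 hq m h]

lemma degLE_sub {n : ℤ} {p q : MvPolynomial (Fin 3) ℝ} (hp : degLE n p) (hq : degLE n q) :
    degLE n (p - q) := by
  rw [sub_eq_add_neg]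
  exact degLE_add hp (degLE_of_support_subset (by rw [support_neg]) hq)

lemma degLE_sum {ι : Type*} {s : Finset ι} {n : ℤ} {f : ι → MvPolynomial (Fin 3) ℝ}
    (hf : ∀ i ∈ s, degLE n (f i)) : degLE n (∑ i ∈ s, f i) :=
  Finset.sum_induction f (degLE n) (fun _ _ => degLE_add) (by simp [degLE_iff]) hf

lemma degLE_eulerInv (k : ℕ) {n : ℤ} {p : MvPolynomial (Fin 3) ℝ} (hp : degLE n p) :
    degLE n (eulerInv k p) :=
  degLE_of_support_subset (fun m hm => by
    rw [mem_support_iff] at hm ⊢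
    rw [coeff_eulerInv] at hm
    exact right_ne_zero_of_mul hm) hp

lemma degLE_X_mul (i : Fin 3) {n : ℤ} {p : MvPolynomial (Fin 3) ℝ} (hp : degLE n p) :
    degLE (n + 1) (X i * p) := by
  refine degLE_iff.2 fun m hm => ?_
  obtain ⟨m', hm', rfl⟩ := Finset.mem_map.1 ((support_X_mul i p).subset hm)
  have := degLE_iff.1 hp m' hm'
  simp only [addLeftEmbedding_apply, map_add, Finsupp.degree_single]
  omega

lemma degLE_cross_X {n : ℤ} {w : Fin 3 → MvPolynomial (Fin 3) ℝ} (hw : ∀ i, degLE n (w i))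
    (i : Fin 3) : degLE (n + 1) ((w ⨯₃ X) i) := by
  have h a b : degLE (n + 1) (w a * X b) := mul_comm (X b) (w a) ▸ degLE_X_mul b (hw a)
  fin_cases i <;> exact degLE_sub (h _ _) (h _ _)

/-- Exactness of `ℝ → P_r → (P_{r-1})³ → (P_{r-2})³ → P_{r-3} → 0` (inclusion of constants,
gradient, curl, divergence) in three variables: the kernel of `grad` is the constants,
the kernel of `curl` equals the image of `grad`, the kernel of `div` equals the image
of `curl`, and `div` is surjective onto `P_{r-3}`. -/
theorem grad_curl_div_exact_3d (r : ℕ) :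
    (∀ p : MvPolynomial (Fin 3) ℝ, p.totalDegree ≤ r →
      ((∀ i, pderiv i p = 0) ↔ ∃ c : ℝ, p = C c)) ∧
    (∀ v : Fin 3 → MvPolynomial (Fin 3) ℝ, (∀ i, degLE ((r : ℤ) - 1) (v i)) →
      (curl3 v = 0 ↔
        ∃ p : MvPolynomial (Fin 3) ℝ, p.totalDegree ≤ r ∧ ∀ i, v i = pderiv i p)) ∧
    (∀ w : Fin 3 → MvPolynomial (Fin 3) ℝ, (∀ i, degLE ((r : ℤ) - 2) (w i)) →
      (pderiv 0 (w 0) + pderiv 1 (w 1) + pderiv 2 (w 2) = 0 ↔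
        ∃ v : Fin 3 → MvPolynomial (Fin 3) ℝ, (∀ i, degLE ((r : ℤ) - 1) (v i)) ∧ w = curl3 v)) ∧
    (∀ q : MvPolynomial (Fin 3) ℝ, degLE ((r : ℤ) - 3) q →
      ∃ w : Fin 3 → MvPolynomial (Fin 3) ℝ, (∀ i, degLE ((r : ℤ) - 2) (w i)) ∧
        pderiv 0 (w 0) + pderiv 1 (w 1) + pderiv 2 (w 2) = q) := by
  refine ⟨fun p _ => forall_pderiv_eq_zero_iff p, fun v hv => ?_, fun w hw => ?_, fun q hq => ?_⟩
  · rw [curl3_eq_zero_iff]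
    refine ⟨fun hsymm => ⟨eulerInv 0 (∑ j, X j * v j), ?_, fun i => ?_⟩, ?_⟩
    · refine degLE_natCast.1 (degLE_eulerInv 0 (degLE_sum fun j _ => ?_))
      simpa using degLE_X_mul j (hv j)
    · exact (pderiv_eulerInv_sum_X_mul hsymm i).symm
    · rintro ⟨p, -, hp⟩ i j
      rw [hp, hp, pderiv_pderiv_comm]
  · refine ⟨fun hdiv => ⟨fun i => eulerInv 1 ((w ⨯₃ X) i), fun i => ?_, ?_⟩, ?_⟩
    · simpa [sub_add] using degLE_eulerInv 1 (degLE_cross_X hw i)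
    · exact (curl3_eulerInv_cross_X hdiv).symm
    · rintro ⟨v, -, rfl⟩
      exact div_curl3 v
  · refine ⟨fun i => eulerInv 2 (X i * q), fun i => ?_, ?_⟩
    · simpa [sub_add] using degLE_eulerInv 2 (degLE_X_mul i hq)
    · simpa [Fin.sum_univ_three] using sum_pderiv_eulerInv_X_mul (by simp) q
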